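/- arXiv:math/0408209 — 4 statements merged into one kernel-verified Lean document; each statement's English description precedes it below -/
import Mathlib

section
/- For every vector ξ ∈ ℝ³ and every R > 0 there exist θ, θ' ∈ M (vectors in ℂ³ with θ·θ = θ'·θ' = 1) such that θ' − θ = ξ (with ξ viewed as an element of ℂ³) and |θ| > R. -/
lemma aux_stmt4 (ξ a b : Fin 3 → ℝ) (R : ℝ) (hR : 0 < R)
    (h1 : a 0^2 + a 1^2 + a 2^2 = 1 + (b 0^2 + b 1^2 + b 2^2))
    (h2 : a 0*b 0 + a 1*b 1 + a 2*b 2 = 0)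
    (h3 : 2*(a 0*ξ 0 + a 1*ξ 1 + a 2*ξ 2) + (ξ 0^2 + ξ 1^2 + ξ 2^2) = 0)
    (h4 : b 0*ξ 0 + b 1*ξ 1 + b 2*ξ 2 = 0)
    (h5 : R^2 ≤ b 0^2 + b 1^2 + b 2^2) :
    ∃ θ θ' : EuclideanSpace ℂ (Fin 3),
      (∑ i, θ i * θ i = 1) ∧ (∑ i, θ' i * θ' i = 1) ∧
      (∀ i, θ' i - θ i = (ξ i : ℂ)) ∧ ‖θ‖ > R := by
  refine ⟨WithLp.toLp 2 (fun i => (a i : ℂ) + (b i : ℂ) * Complex.I),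
          WithLp.toLp 2 (fun i => ((a i : ℂ) + (b i : ℂ) * Complex.I) + (ξ i : ℂ)), ?_, ?_, ?_, ?_⟩
  · show ∑ i : Fin 3, ((a i : ℂ) + (b i : ℂ) * Complex.I) * ((a i : ℂ) + (b i : ℂ) * Complex.I) = 1
    rw [Fin.sum_univ_three]
    apply Complex.ext <;> simp [Complex.mul_re, Complex.mul_im] <;> nlinarith [h1, h2]
  · show ∑ i : Fin 3, (((a i : ℂ) + (b i : ℂ) * Complex.I) + (ξ i:ℂ)) * (((a i : ℂ) + (b i : ℂ) * Complex.I) + (ξ i:ℂ)) = 1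
    rw [Fin.sum_univ_three]
    apply Complex.ext <;> simp [Complex.mul_re, Complex.mul_im] <;> nlinarith [h1, h2, h3, h4]
  · intro i; simp only [PiLp.toLp_apply]; ring
  · have hnorm := EuclideanSpace.norm_eq
        (WithLp.toLp 2 (fun i => (a i : ℂ) + (b i : ℂ) * Complex.I) : EuclideanSpace ℂ (Fin 3))
    rw [hnorm]
    have habs : ∀ i : Fin 3, ‖(a i : ℂ) + (b i : ℂ) * Complex.I‖^2 = a i^2 + b i^2 := by
      intro i
      rw [Complex.sq_norm, Complex.normSq_apply]
      simp
      ring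
    have key : ∑ i : Fin 3, ‖(a i : ℂ) + (b i : ℂ) * Complex.I‖^2
        = 1 + 2*(b 0^2 + b 1^2 + b 2^2) := by
      rw [Fin.sum_univ_three, habs 0, habs 1, habs 2]; linarith
    beta_reduce
    simp only [PiLp.toLp_apply]
    rw [key]
    rw [show R = Real.sqrt (R^2) from (Real.sqrt_sq hR.le).symm]
    apply Real.sqrt_lt_sqrt (by positivity)
    linarith [h5, sq_nonneg R]

/-- For every `ξ ∈ ℝ³` and every `R > 0` there exist `θ, θ' ∈ M`
(i.e. `θ·θ = θ'·θ' = 1` for the bilinear dot product on ℂ³) such that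
`θ' - θ = ξ` and `|θ| > R` (Euclidean norm on ℂ³). -/
theorem stmt_4 (ξ : Fin 3 → ℝ) :
    ∀ R : ℝ, R > 0 → ∃ θ θ' : EuclideanSpace ℂ (Fin 3),
      (∑ i, θ i * θ i = 1) ∧ (∑ i, θ' i * θ' i = 1) ∧
      (∀ i, θ' i - θ i = (ξ i : ℂ)) ∧ ‖θ‖ > R := by
  intro R hR
  by_cases hA : ξ 1 = 0 ∧ ξ 2 = 0
  · obtain ⟨h1z, h2z⟩ := hA
    set s := Real.sqrt (1 + R^2) with hs_def
    set T := Real.sqrt (R^2 + (ξ 0)^2/4) with hT_def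
    have hs : s^2 = 1 + R^2 := Real.sq_sqrt (by positivity)
    have hT : T^2 = R^2 + (ξ 0)^2/4 := Real.sq_sqrt (by positivity)
    apply aux_stmt4 ξ ![-(ξ 0)/2, 0, s] ![0, T, 0] R hR <;>
      simp only [Matrix.cons_val_zero, Matrix.cons_val_one, Matrix.head_cons,
        Matrix.cons_val_two, Matrix.tail_cons, h1z, h2z]
    · nlinarith
    · ring
    · ring
    · ring
    · nlinarith [sq_nonneg (ξ 0)]
  · have hq : 0 < ξ 1^2 + ξ 2^2 := by
      rcases not_and_or.mp hA with h | h <;> positivity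
    have hS : 0 < ξ 0^2 + (ξ 1^2 + ξ 2^2) := by positivity
    set t := Real.sqrt ((R^2 + (ξ 0^2 + (ξ 1^2 + ξ 2^2))/4)/(ξ 1^2 + ξ 2^2)) with ht_def
    set u := Real.sqrt ((1 + R^2)/((ξ 1^2 + ξ 2^2)*(ξ 0^2 + (ξ 1^2 + ξ 2^2)))) with hu_def
    have ht0 : t^2 = (R^2 + (ξ 0^2 + (ξ 1^2 + ξ 2^2))/4)/(ξ 1^2 + ξ 2^2) :=
      Real.sq_sqrt (by positivity)
    have hu0 : u^2 = (1 + R^2)/((ξ 1^2 + ξ 2^2)*(ξ 0^2 + (ξ 1^2 + ξ 2^2))) :=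
      Real.sq_sqrt (by positivity)
    have ht : t^2 * (ξ 1^2 + ξ 2^2) = R^2 + (ξ 0^2 + (ξ 1^2 + ξ 2^2))/4 := by
      rw [ht0]; field_simp
    have hu : u^2 * ((ξ 1^2 + ξ 2^2)*(ξ 0^2 + (ξ 1^2 + ξ 2^2))) = 1 + R^2 := by
      rw [hu0]; field_simp
    apply aux_stmt4 ξ
        ![-(ξ 0)/2 + u*(ξ 1^2 + ξ 2^2), -(ξ 1)/2 - u*(ξ 0*ξ 1), -(ξ 2)/2 - u*(ξ 0*ξ 2)]
        ![0, -(t*ξ 2), t*ξ 1] R hR <;>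
      simp only [Matrix.cons_val_zero, Matrix.cons_val_one, Matrix.head_cons,
        Matrix.cons_val_two, Matrix.tail_cons]
    · linear_combination hu - ht
    · ring
    · ring
    · ring
    · nlinarith [ht, sq_nonneg (ξ 0)]
end

section
/- A vector of the form (θ₁, θ₂, 1) ∈ ℂ³ belongs to M if and only if θ₁² + θ₂² = 0. If in addition (θ₁, θ₂) ≠ (0, 0), then (θ₁, θ₂, 1) does not belong to M'. The set of such vectors, i.e. M ∩ {θ : θ₃ = 1} \ M', is infinite; in particular M' is a proper subset of M. -/
/-- The variety `M = {θ ∈ ℂ³ : θ·θ = 1}` (bilinear dot product). -/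
def Mvariety : Set (Fin 3 → ℂ) := {θ | ∑ i, θ i * θ i = 1}

/-- The subset `M' = {(sin ϑ cos φ, sin ϑ sin φ, cos ϑ) : ϑ, φ ∈ ℂ}`. -/
def Mprime : Set (Fin 3 → ℂ) :=
  {θ | ∃ ϑ φ : ℂ, θ = ![Complex.sin ϑ * Complex.cos φ,
      Complex.sin ϑ * Complex.sin φ, Complex.cos ϑ]}

lemma mem_Mvariety_iff (θ₁ θ₂ : ℂ) :
    (![θ₁, θ₂, 1] : Fin 3 → ℂ) ∈ Mvariety ↔ θ₁ ^ 2 + θ₂ ^ 2 = 0 := by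
  simp only [Mvariety, Set.mem_setOf_eq, Fin.sum_univ_three]
  simp [Matrix.cons_val_zero, Matrix.cons_val_one]
  constructor
  · intro h; linear_combination h - sq θ₁ - sq θ₂
  · intro h; linear_combination h + sq θ₁ + sq θ₂

lemma not_mem_Mprime (θ₁ θ₂ : ℂ) (h : θ₁ ^ 2 + θ₂ ^ 2 = 0) (hne : (θ₁, θ₂) ≠ (0, 0)) :
    (![θ₁, θ₂, 1] : Fin 3 → ℂ) ∉ Mprime := by
  rintro ⟨ϑ, φ, hθ⟩
  have h2 : (1 : ℂ) = Complex.cos ϑ := by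
    have := congrFun hθ 2; simpa using this
  have hsin : Complex.sin ϑ = 0 := by
    have hpyth := Complex.sin_sq_add_cos_sq ϑ
    have : Complex.sin ϑ ^ 2 = 0 := by
      rw [← h2] at hpyth; linear_combination hpyth
    exact pow_eq_zero_iff (n := 2) (by norm_num) |>.mp this
  have h0 : θ₁ = 0 := by
    have := congrFun hθ 0; simp [hsin] at this; exact this
  have h1 : θ₂ = 0 := by
    have := congrFun hθ 1; simp [hsin] at this; exact this
  exact hne (by simp [h0, h1])

/-- `(θ₁, θ₂, 1) ∈ M` iff `θ₁² + θ₂² = 0`; if moreover `(θ₁, θ₂) ≠ (0,0)` then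
`(θ₁, θ₂, 1) ∉ M'`; the set `M ∩ {θ₃ = 1} \ M'` is infinite; in particular
`M'` is a proper subset of `M`. -/
theorem stmt_6 :
    (∀ θ₁ θ₂ : ℂ, (![θ₁, θ₂, 1] : Fin 3 → ℂ) ∈ Mvariety ↔ θ₁ ^ 2 + θ₂ ^ 2 = 0) ∧
    (∀ θ₁ θ₂ : ℂ, θ₁ ^ 2 + θ₂ ^ 2 = 0 → (θ₁, θ₂) ≠ (0, 0) →
      (![θ₁, θ₂, 1] : Fin 3 → ℂ) ∉ Mprime) ∧
    {θ : Fin 3 → ℂ | θ ∈ Mvariety ∧ θ 2 = 1 ∧ θ ∉ Mprime}.Infinite ∧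
    Mprime ⊂ Mvariety := by
  refine ⟨mem_Mvariety_iff, not_mem_Mprime, ?_, ?_, ?_⟩
  · apply Set.infinite_of_injective_forall_mem
      (f := fun n : ℕ => (![(n : ℂ) + 1, Complex.I * ((n : ℂ) + 1), 1] : Fin 3 → ℂ))
    · intro a b hab
      have := congrFun hab 0
      simp at this
      exact_mod_cast this
    · intro n
      have hsq : ((n : ℂ) + 1) ^ 2 + (Complex.I * ((n : ℂ) + 1)) ^ 2 = 0 := by
        ring_nf; rw [Complex.I_sq]; ring
      have hne : (((n : ℂ) + 1), Complex.I * ((n : ℂ) + 1)) ≠ (0, 0) := by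
        intro hc
        have : ((n : ℂ) + 1) = 0 := (Prod.mk.injEq _ _ _ _ ▸ hc).1
        have : ((n : ℝ) + 1) = 0 := by exact_mod_cast this
        nlinarith [Nat.cast_nonneg (α := ℝ) n]
      exact ⟨(mem_Mvariety_iff _ _).mpr hsq, by simp, not_mem_Mprime _ _ hsq hne⟩
  · rintro θ ⟨ϑ, φ, rfl⟩
    simp only [Mvariety, Set.mem_setOf_eq, Fin.sum_univ_three]
    simp only [Matrix.cons_val_zero, Matrix.cons_val_one, Matrix.head_cons,
      Matrix.cons_val_two, Matrix.tail_cons]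
    have h1 := Complex.sin_sq_add_cos_sq ϑ
    have h2 := Complex.sin_sq_add_cos_sq φ
    linear_combination (Complex.sin ϑ ^ 2) * h2 + h1
  · intro hsub
    have := hsub (mem_Mvariety_iff 1 Complex.I |>.mpr (by simp [Complex.I_sq]))
    exact not_mem_Mprime 1 Complex.I (by simp [Complex.I_sq]) (by simp) this
end

section
/- Let t ∈ ℝ with t ≠ 2 and t ≠ −2, and let ξ = t e₃ ∈ ℝ³. Then for every R > 0 there exist θ, θ' ∈ M' (i.e. vectors of the form (sin ϑ cos φ, sin ϑ sin φ, cos ϑ) with ϑ, φ ∈ ℂ) such that θ' − θ = ξ and |θ| > R. -/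
/-- For `t ∈ ℝ` with `t ≠ ±2` and `ξ = t e₃`, for every `R > 0` there exist
`θ, θ' ∈ M' = {(sin ϑ cos φ, sin ϑ sin φ, cos ϑ) : ϑ, φ ∈ ℂ}` with `θ' - θ = ξ`
and `|θ| > R` (Euclidean norm on ℂ³). -/
theorem stmt_7 (t : ℝ) (ht : t ≠ 2) (ht' : t ≠ -2) :
    ∀ R : ℝ, R > 0 → ∃ θ θ' : Fin 3 → ℂ,
      (∃ ϑ φ : ℂ, θ = ![Complex.sin ϑ * Complex.cos φ,
          Complex.sin ϑ * Complex.sin φ, Complex.cos ϑ]) ∧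
      (∃ ϑ φ : ℂ, θ' = ![Complex.sin ϑ * Complex.cos φ,
          Complex.sin ϑ * Complex.sin φ, Complex.cos ϑ]) ∧
      θ' - θ = ![0, 0, (t : ℂ)] ∧
      Real.sqrt (∑ i, ‖θ i‖ ^ 2) > R := by
  intro R hR
  -- choose ϑ with cos ϑ = -t/2
  obtain ⟨ϑ, hϑ⟩ := Complex.cos_surjective (-(t : ℂ) / 2)
  have hs : Complex.sin ϑ ≠ 0 := by
    intro h
    have h1 : Complex.sin ϑ ^ 2 + Complex.cos ϑ ^ 2 = 1 := Complex.sin_sq_add_cos_sq ϑ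
    rw [h, hϑ] at h1
    have h2 : ((t : ℂ)) ^ 2 = 4 := by linear_combination 4 * h1
    have h3 : (t : ℝ) ^ 2 = 4 := by exact_mod_cast h2
    have h4 : (t - 2) * (t + 2) = 0 := by ring_nf; linarith [h3]
    rcases mul_eq_zero.1 h4 with h | h
    · exact ht (by linarith)
    · exact ht' (by linarith)
  set s := Complex.sin ϑ with hsdef
  have hsabs : 0 < ‖s‖ := by
    exact norm_pos_iff.mpr hs
  -- choose φ = y * I with y large
  set y : ℝ := 2 * (R + 1) / ‖s‖ with hy
  have hy0 : 0 < y := by positivity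
  set φ : ℂ := (y : ℂ) * Complex.I with hφ
  have hcos : Complex.cos φ = Real.cosh y := by
    rw [hφ, Complex.cos_mul_I]
    exact_mod_cast (Complex.ofReal_cosh y).symm
  refine ⟨![s * Complex.cos φ, s * Complex.sin φ, Complex.cos ϑ],
    ![Complex.sin (Real.pi - ϑ) * Complex.cos φ, Complex.sin (Real.pi - ϑ) * Complex.sin φ,
      Complex.cos (Real.pi - ϑ)], ⟨ϑ, φ, rfl⟩, ⟨Real.pi - ϑ, φ, rfl⟩, ?_, ?_⟩
  · have h1 : Complex.sin ((Real.pi : ℂ) - ϑ) = s := by rw [Complex.sin_pi_sub]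
    have h2 : Complex.cos ((Real.pi : ℂ) - ϑ) = -Complex.cos ϑ := Complex.cos_pi_sub ϑ
    funext i
    fin_cases i <;> simp [h1, h2, hϑ] <;> ring
  · -- norm estimate
    rw [Fin.sum_univ_three]
    have key : R < ‖s‖ * Real.cosh y := by
      have h5 : (1 + y) / 2 ≤ Real.cosh y := by
        have := Real.add_one_le_exp y
        have hc : Real.exp y / 2 ≤ Real.cosh y := by
          rw [Real.cosh_eq]
          nlinarith [Real.exp_pos (-y)]
        nlinarith [Real.exp_pos (-y)]
      have h6 : ‖s‖ * ((1 + y) / 2) ≤ ‖s‖ * Real.cosh y :=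
        mul_le_mul_of_nonneg_left h5 hsabs.le
      have h7 : ‖s‖ * (y / 2) = R + 1 := by
        field_simp [hy]
        rw [hy, mul_div_assoc', mul_div_cancel_left₀ _ hsabs.ne']
      nlinarith
    have habs0 : ‖s * Complex.cos φ‖ = ‖s‖ * Real.cosh y := by
      rw [norm_mul, hcos, Complex.norm_real, Real.norm_eq_abs, abs_of_pos (Real.cosh_pos y)]
    simp only [Matrix.cons_val_zero, Matrix.cons_val_one, Matrix.head_cons,
      Matrix.cons_val_two, Matrix.tail_cons]
    have hge : R ^ 2 < ‖s * Complex.cos φ‖ ^ 2 +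
        (‖s * Complex.sin φ‖ ^ 2 + ‖Complex.cos ϑ‖ ^ 2) := by
      have : R ^ 2 < ‖s * Complex.cos φ‖ ^ 2 := by
        rw [habs0]; nlinarith
      nlinarith [sq_nonneg (‖s * Complex.sin φ‖),
        sq_nonneg (‖Complex.cos ϑ‖)]
    have := (Real.lt_sqrt hR.le).2 (by linarith [hge] :
      R ^ 2 < ‖s * Complex.cos φ‖ ^ 2 + ‖s * Complex.sin φ‖ ^ 2 +
        ‖Complex.cos ϑ‖ ^ 2)
    exact this
end

section
/- Let D ⊂ ℝ² be a nonempty compact convex set, let l(t) = (cos t, sin t) for t ∈ ℝ, and let p(t) := inf{ x·l(t) : x ∈ D } be its support function. Suppose p is differentiable at t₀. Then the point x₀ := ( p(t₀) cos t₀ − p'(t₀) sin t₀ , p(t₀) sin t₀ + p'(t₀) cos t₀ ) belongs to D, satisfies x₀·l(t₀) = p(t₀), and is the unique point of D at which the minimum of x ↦ x·l(t₀) over D is attained. -/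
open scoped RealInnerProductSpace

/-- The vector `(a, b)` in the Euclidean plane. -/
noncomputable def vec2 (a b : ℝ) : EuclideanSpace ℝ (Fin 2) := (WithLp.equiv 2 (Fin 2 → ℝ)).symm ![a, b]

lemma inner_vec2 (x : EuclideanSpace ℝ (Fin 2)) (c d : ℝ) :
    ⟪x, vec2 c d⟫ = x 0 * c + x 1 * d := by
  simp [vec2, PiLp.inner_apply, Fin.sum_univ_two, mul_comm]

lemma eq_vec2 (x : EuclideanSpace ℝ (Fin 2)) : x = vec2 (x 0) (x 1) := by
  ext i
  fin_cases i <;> simp [vec2]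

/-- Let `D ⊂ ℝ²` be nonempty, compact and convex, `l t = (cos t, sin t)`, and
`p t = inf {x·l(t) : x ∈ D}` the support function. If `p` is differentiable at `t₀`
with derivative `p'`, then `x₀ = (p t₀ cos t₀ − p' sin t₀, p t₀ sin t₀ + p' cos t₀)`
belongs to `D`, satisfies `x₀·l(t₀) = p t₀`, and is the unique point of `D` where the
minimum of `x ↦ x·l(t₀)` over `D` is attained. -/
theorem stmt_10 (D : Set (EuclideanSpace ℝ (Fin 2))) (hne : D.Nonempty)
    (hcomp : IsCompact D) (hconv : Convex ℝ D)
    (p : ℝ → ℝ)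
    (hp : ∀ t : ℝ, p t = sInf ((fun x => ⟪x, vec2 (Real.cos t) (Real.sin t)⟫) '' D))
    (t₀ p' : ℝ) (hder : HasDerivAt p p' t₀) :
    vec2 (p t₀ * Real.cos t₀ - p' * Real.sin t₀)
         (p t₀ * Real.sin t₀ + p' * Real.cos t₀) ∈ D ∧
    ⟪vec2 (p t₀ * Real.cos t₀ - p' * Real.sin t₀)
          (p t₀ * Real.sin t₀ + p' * Real.cos t₀),
      vec2 (Real.cos t₀) (Real.sin t₀)⟫ = p t₀ ∧
    ∀ x ∈ D, ⟪x, vec2 (Real.cos t₀) (Real.sin t₀)⟫ = p t₀ →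
      x = vec2 (p t₀ * Real.cos t₀ - p' * Real.sin t₀)
               (p t₀ * Real.sin t₀ + p' * Real.cos t₀) := by
  -- basic: for every t, p t is a lower bound for ⟪·, l t⟫ on D
  have hcont : ∀ t : ℝ, Continuous fun x : EuclideanSpace ℝ (Fin 2) =>
      ⟪x, vec2 (Real.cos t) (Real.sin t)⟫ := fun t =>
    continuous_id.inner continuous_const
  have hle : ∀ t : ℝ, ∀ x ∈ D, p t ≤ ⟪x, vec2 (Real.cos t) (Real.sin t)⟫ := by
    intro t x hx
    rw [hp t]
    exact csInf_le ((hcomp.image (hcont t)).bddBelow) ⟨x, hx, rfl⟩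
  -- uniqueness (and form) of the minimizer
  have huniq : ∀ x ∈ D, ⟪x, vec2 (Real.cos t₀) (Real.sin t₀)⟫ = p t₀ →
      x = vec2 (p t₀ * Real.cos t₀ - p' * Real.sin t₀)
               (p t₀ * Real.sin t₀ + p' * Real.cos t₀) := by
    intro x hx hmin
    have hxval : x 0 * Real.cos t₀ + x 1 * Real.sin t₀ = p t₀ := by
      rw [← inner_vec2]; exact hmin
    -- f t = x·l(t) - p t ≥ 0 with equality at t₀
    set f : ℝ → ℝ := fun t => x 0 * Real.cos t + x 1 * Real.sin t - p t with hf
    have hf0 : f t₀ = 0 := by simp [hf, hxval]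
    have hfnn : ∀ t, 0 ≤ f t := by
      intro t
      have := hle t x hx
      rw [inner_vec2] at this
      simp [hf]; linarith
    have hmin' : IsLocalMin f t₀ := by
      apply Filter.Eventually.of_forall
      intro y; rw [hf0]; exact hfnn y
    have hderf : HasDerivAt f (x 0 * (-Real.sin t₀) + x 1 * Real.cos t₀ - p') t₀ :=
      (((Real.hasDerivAt_cos t₀).const_mul (x 0)).add
        ((Real.hasDerivAt_sin t₀).const_mul (x 1))).sub hder
    have hzero := hmin'.hasDerivAt_eq_zero hderf
    have hb : -(x 0) * Real.sin t₀ + x 1 * Real.cos t₀ = p' := by linarith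
    have h0 : x 0 = p t₀ * Real.cos t₀ - p' * Real.sin t₀ := by
      have s := Real.sin_sq_add_cos_sq t₀
      linear_combination Real.cos t₀ * hxval - Real.sin t₀ * hb - x 0 * s
    have h1 : x 1 = p t₀ * Real.sin t₀ + p' * Real.cos t₀ := by
      have s := Real.sin_sq_add_cos_sq t₀
      linear_combination Real.sin t₀ * hxval + Real.cos t₀ * hb - x 1 * s
    rw [eq_vec2 x, h0, h1]
  -- the inner-product value of the candidate point
  have hval : ⟪vec2 (p t₀ * Real.cos t₀ - p' * Real.sin t₀)
      (p t₀ * Real.sin t₀ + p' * Real.cos t₀),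
      vec2 (Real.cos t₀) (Real.sin t₀)⟫ = p t₀ := by
    rw [inner_vec2]
    simp only [vec2, WithLp.equiv_symm_apply, PiLp.toLp_apply]
    have s := Real.sin_sq_add_cos_sq t₀
    simp only [Matrix.cons_val_zero, Matrix.cons_val_one, Matrix.head_cons]
    linear_combination p t₀ * s
  -- existence of a minimizer: the inf is attained
  have hex : ∃ x ∈ D, ⟪x, vec2 (Real.cos t₀) (Real.sin t₀)⟫ = p t₀ := by
    obtain ⟨x, hx, hxm⟩ := hcomp.exists_isMinOn hne (hcont t₀).continuousOn
    refine ⟨x, hx, le_antisymm ?_ (hle t₀ x hx)⟩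
    rw [hp t₀]
    apply le_csInf (hne.image _)
    rintro b ⟨y, hy, rfl⟩
    exact hxm hy
  obtain ⟨x, hx, hxeq⟩ := hex
  have := huniq x hx hxeq
  exact ⟨this ▸ hx, hval, huniq⟩
end
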